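/- arXiv:2501.00481 — 5 statements merged into one kernel-verified Lean document; each statement's English description precedes it below -/
import Mathlib

section
/- In Nelson's paraconsistent first-order logic N4 with identity, the formula ¬Ix[F,G] derives the formula ∀x(¬F ∨ ∃y(F[x:=y] ∧ ¬ y=x) ∨ ¬G), where Ix[F,G] is the binary definite-description quantifier governed by the rules (II), (¬IE), (IE₁), (IE₂), (¬II₁), (¬II₂), (¬II₃). -/
/-- First-order terms: variables and constants. -/
inductive Tm where
  | var : ℕ → Tm
  | const : ℕ → Tm

/-- Formulas of Nelson's language with strong negation and the binary
definite-description quantifier `iq x F G` (i.e. `Ix[F,G]`).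
Identity is the distinguished predicate symbol `0` (see `eqf`). -/
inductive Form (P : Type) where
  | atom : P → List Tm → Form P
  | imp : Form P → Form P → Form P
  | and : Form P → Form P → Form P
  | or  : Form P → Form P → Form P
  | neg : Form P → Form P
  | all : ℕ → Form P → Form P
  | ex  : ℕ → Form P → Form P
  | iq  : ℕ → Form P → Form P → Form P

/-- The identity predicate: `t = u`. -/
def eqf {P : Type} (e : P) (t u : Tm) : Form P := .atom e [t, u]

def Tm.subst (x : ℕ) (t : Tm) : Tm → Tm
  | .var y => if y = x then t else .var y
  | .const c => .const c

/-- Substitution `A[x := t]` (substituting `t` for the free occurrences of `x`). -/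
def Form.subst {P : Type} (x : ℕ) (t : Tm) : Form P → Form P
  | .atom p ts => .atom p (ts.map (Tm.subst x t))
  | .imp A B => .imp (A.subst x t) (B.subst x t)
  | .and A B => .and (A.subst x t) (B.subst x t)
  | .or A B => .or (A.subst x t) (B.subst x t)
  | .neg A => .neg (A.subst x t)
  | .all y A => if y = x then .all y A else .all y (A.subst x t)
  | .ex y A => if y = x then .ex y A else .ex y (A.subst x t)
  | .iq y F G => if y = x then .iq y F G else .iq y (F.subst x t) (G.subst x t)

def Tm.fv : Tm → Set ℕ
  | .var y => {y}
  | .const _ => ∅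

/-- Free variables of a formula. -/
def Form.fv {P : Type} : Form P → Set ℕ
  | .atom _ ts => {y | ∃ t ∈ ts, y ∈ t.fv}
  | .imp A B => A.fv ∪ B.fv
  | .and A B => A.fv ∪ B.fv
  | .or A B => A.fv ∪ B.fv
  | .neg A => A.fv
  | .all y A => A.fv \ {y}
  | .ex y A => A.fv \ {y}
  | .iq y F G => (F.fv ∪ G.fv) \ {y}

/-- Bound variables of a formula. -/
def Form.bv {P : Type} : Form P → Set ℕ
  | .atom _ _ => ∅
  | .imp A B => A.bv ∪ B.bv
  | .and A B => A.bv ∪ B.bv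
  | .or A B => A.bv ∪ B.bv
  | .neg A => A.bv
  | .all y A => insert y A.bv
  | .ex y A => insert y A.bv
  | .iq y F G => insert y (F.bv ∪ G.bv)

/-- `t` is free for `x` in `A` (sufficient condition: no variable of `t` is bound in `A`). -/
def FreeFor {P : Type} (t : Tm) (A : Form P) : Prop := ∀ v ∈ t.fv, v ∉ A.bv

/-- Atomic formulas and their negations (for the `=E` rule). -/
def IsBasic {P : Type} : Form P → Prop
  | .atom _ _ => True
  | .neg (.atom _ _) => True
  | _ => False

/-- Natural deduction for Nelson's paraconsistent first-order logic N4 with identity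
(`eqp` is the identity predicate), extended by Kürbis' rules for the binary
definite-description quantifier `I` (ordinary, non-free versions of the rules). -/
inductive N4 {P : Type} (eqp : P) : Set (Form P) → Form P → Prop where
  | hyp {Γ : Set (Form P)} {A : Form P} : A ∈ Γ → N4 eqp Γ A
  | andI {Γ : Set (Form P)} {A B : Form P} : N4 eqp Γ A → N4 eqp Γ B → N4 eqp Γ (A.and B)
  | andE1 {Γ : Set (Form P)} {A B : Form P} : N4 eqp Γ (A.and B) → N4 eqp Γ A
  | andE2 {Γ : Set (Form P)} {A B : Form P} : N4 eqp Γ (A.and B) → N4 eqp Γ B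
  | orI1 {Γ : Set (Form P)} {A B : Form P} : N4 eqp Γ A → N4 eqp Γ (A.or B)
  | orI2 {Γ : Set (Form P)} {A B : Form P} : N4 eqp Γ B → N4 eqp Γ (A.or B)
  | orE {Γ : Set (Form P)} {A B C : Form P} : N4 eqp Γ (A.or B) → N4 eqp (insert A Γ) C → N4 eqp (insert B Γ) C →
      N4 eqp Γ C
  | impI {Γ : Set (Form P)} {A B : Form P} : N4 eqp (insert A Γ) B → N4 eqp Γ (A.imp B)
  | impE {Γ : Set (Form P)} {A B : Form P} : N4 eqp Γ (A.imp B) → N4 eqp Γ A → N4 eqp Γ B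
  | negnegI {Γ : Set (Form P)} {A : Form P} : N4 eqp Γ A → N4 eqp Γ A.neg.neg
  | negnegE {Γ : Set (Form P)} {A : Form P} : N4 eqp Γ A.neg.neg → N4 eqp Γ A
  | negimpI {Γ : Set (Form P)} {A B : Form P} : N4 eqp Γ A → N4 eqp Γ B.neg → N4 eqp Γ (A.imp B).neg
  | negimpE1 {Γ : Set (Form P)} {A B : Form P} : N4 eqp Γ (A.imp B).neg → N4 eqp Γ A
  | negimpE2 {Γ : Set (Form P)} {A B : Form P} : N4 eqp Γ (A.imp B).neg → N4 eqp Γ B.neg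
  | negorI {Γ : Set (Form P)} {A B : Form P} : N4 eqp Γ A.neg → N4 eqp Γ B.neg → N4 eqp Γ (A.or B).neg
  | negorE1 {Γ : Set (Form P)} {A B : Form P} : N4 eqp Γ (A.or B).neg → N4 eqp Γ A.neg
  | negorE2 {Γ : Set (Form P)} {A B : Form P} : N4 eqp Γ (A.or B).neg → N4 eqp Γ B.neg
  | negandI1 {Γ : Set (Form P)} {A B : Form P} : N4 eqp Γ A.neg → N4 eqp Γ (A.and B).neg
  | negandI2 {Γ : Set (Form P)} {A B : Form P} : N4 eqp Γ B.neg → N4 eqp Γ (A.and B).neg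
  | negandE {Γ : Set (Form P)} {A B C : Form P} : N4 eqp Γ (A.and B).neg → N4 eqp (insert A.neg Γ) C →
      N4 eqp (insert B.neg Γ) C → N4 eqp Γ C
  | allI {Γ : Set (Form P)} {A : Form P} {x y : ℕ} : N4 eqp Γ (A.subst x (.var y)) →
      (∀ B ∈ Γ, y ∉ B.fv) → (y = x ∨ y ∉ A.fv) → N4 eqp Γ (.all x A)
  | allE {Γ : Set (Form P)} {A : Form P} {x : ℕ} {t : Tm} : N4 eqp Γ (.all x A) → FreeFor t A → N4 eqp Γ (A.subst x t)
  | negallI {Γ : Set (Form P)} {A : Form P} {x : ℕ} {t : Tm} : N4 eqp Γ (A.subst x t).neg → FreeFor t A →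
      N4 eqp Γ (Form.all x A).neg
  | negallE {Γ : Set (Form P)} {A C : Form P} {x y : ℕ} : N4 eqp Γ (Form.all x A).neg →
      N4 eqp (insert (A.subst x (.var y)).neg Γ) C →
      y ∉ C.fv → (∀ B ∈ Γ, y ∉ B.fv) → (y = x ∨ y ∉ A.fv) → N4 eqp Γ C
  | exI {Γ : Set (Form P)} {A : Form P} {x : ℕ} {t : Tm} : N4 eqp Γ (A.subst x t) → FreeFor t A → N4 eqp Γ (.ex x A)
  | exE {Γ : Set (Form P)} {A C : Form P} {x y : ℕ} : N4 eqp Γ (.ex x A) → N4 eqp (insert (A.subst x (.var y)) Γ) C →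
      y ∉ C.fv → (∀ B ∈ Γ, y ∉ B.fv) → (y = x ∨ y ∉ A.fv) → N4 eqp Γ C
  | negexI {Γ : Set (Form P)} {A : Form P} {x y : ℕ} : N4 eqp Γ (A.subst x (.var y)).neg →
      (∀ B ∈ Γ, y ∉ B.fv) → (y = x ∨ y ∉ A.fv) → N4 eqp Γ (Form.ex x A).neg
  | negexE {Γ : Set (Form P)} {A : Form P} {x : ℕ} {t : Tm} : N4 eqp Γ (Form.ex x A).neg → FreeFor t A →
      N4 eqp Γ (A.subst x t).neg
  | eqI {Γ : Set (Form P)} {t : Tm} : N4 eqp Γ (eqf eqp t t)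
  | eqE {Γ : Set (Form P)} {A : Form P} {x : ℕ} {t₁ t₂ : Tm} : N4 eqp Γ (eqf eqp t₁ t₂) → N4 eqp Γ (A.subst x t₁) →
      IsBasic A → N4 eqp Γ (A.subst x t₂)
  -- rules for the binary quantifier I (ordinary versions)
  | iqI {Γ : Set (Form P)} {F G : Form P} {x y : ℕ} {t : Tm} : N4 eqp Γ (F.subst x t) → N4 eqp Γ (G.subst x t) →
      N4 eqp (insert (F.subst x (.var y)) Γ) (eqf eqp (.var y) t) →
      FreeFor t F → FreeFor t G → y ≠ x → y ∉ t.fv → (∀ B ∈ Γ, y ∉ B.fv) →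
      N4 eqp Γ (.iq x F G)
  | negiqE {Γ : Set (Form P)} {F G C : Form P} {x y : ℕ} {t : Tm} : N4 eqp Γ (Form.iq x F G).neg →
      N4 eqp (insert (F.subst x t).neg Γ) C →
      N4 eqp (insert (G.subst x t).neg Γ) C →
      N4 eqp (insert (Form.neg (eqf eqp (.var y) t)) (insert (F.subst x (.var y)) Γ)) C →
      FreeFor t F → FreeFor t G → y ≠ x → y ∉ t.fv → (∀ B ∈ Γ, y ∉ B.fv) → y ∉ C.fv →
      N4 eqp Γ C
  | iqE1 {Γ : Set (Form P)} {F G C : Form P} {x y : ℕ} : N4 eqp Γ (.iq x F G) →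
      N4 eqp (insert (G.subst x (.var y)) (insert (F.subst x (.var y)) Γ)) C →
      y ∉ C.fv → (∀ B ∈ Γ, y ∉ B.fv) → (y = x ∨ (y ∉ F.fv ∧ y ∉ G.fv)) →
      N4 eqp Γ C
  | iqE2 {Γ : Set (Form P)} {F G : Form P} {x : ℕ} {t₁ t₂ : Tm} : N4 eqp Γ (.iq x F G) →
      N4 eqp Γ (F.subst x t₁) → N4 eqp Γ (F.subst x t₂) →
      FreeFor t₁ F → FreeFor t₂ F → N4 eqp Γ (eqf eqp t₁ t₂)
  | negiqI1 {Γ : Set (Form P)} {F G : Form P} {x y : ℕ} : N4 eqp Γ (F.subst x (.var y)).neg →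
      (∀ B ∈ Γ, y ∉ B.fv) → (y = x ∨ (y ∉ F.fv ∧ y ∉ G.fv)) →
      N4 eqp Γ (Form.iq x F G).neg
  | negiqI2 {Γ : Set (Form P)} {F G : Form P} {x y : ℕ} : N4 eqp Γ (G.subst x (.var y)).neg →
      (∀ B ∈ Γ, y ∉ B.fv) → (y = x ∨ (y ∉ F.fv ∧ y ∉ G.fv)) →
      N4 eqp Γ (Form.iq x F G).neg
  | negiqI3 {Γ : Set (Form P)} {F G : Form P} {x : ℕ} {t₁ t₂ : Tm} : N4 eqp Γ (eqf eqp t₁ t₂).neg →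
      N4 eqp Γ (F.subst x t₁) → N4 eqp Γ (F.subst x t₂) →
      FreeFor t₁ F → FreeFor t₂ F → N4 eqp Γ (Form.iq x F G).neg

/-- The Nelsonian falsity condition of `Ix[F,G]`:
`∀x(¬F ∨ ∃y(F[x:=y] ∧ ¬ y=x) ∨ ¬G)`. -/
def negIqForm (x y : ℕ) (F G : Form ℕ) : Form ℕ :=
  .all x ((F.neg).or
    ((Form.ex y ((F.subst x (.var y)).and (Form.neg (eqf 0 (.var y) (.var x))))).or
      G.neg))

/-!
Instantiate the universal quantifier with a variable `z` that is fresh and bound neither in `F`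
nor in `G` (`x` itself will not do: it may be bound inside `F`, and then it is not free for `x`).
Rule (¬IE) applied to `¬Ix[F,G]` with `t := z` splits into the three disjuncts `¬F[x:=z]`,
`¬G[x:=z]`, and `F[x:=y] ∧ ¬ y = z`, which ∃I with witness `y` packs into `∃y(…)`.
-/

section

variable {P : Type}

namespace Tm

@[simp]
lemma fv_var (w : ℕ) : (Tm.var w).fv = {w} := rfl

lemma subst_var_self (x : ℕ) (u : Tm) : Tm.subst x (.var x) u = u := by
  cases u with
  | var w => by_cases h : w = x <;> simp [subst, h]
  | const c => rfl

lemma subst_of_notMem_fv {x : ℕ} {u : Tm} (h : x ∉ u.fv) (t : Tm) : Tm.subst x t u = u := by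
  cases u with
  | var w => simp_all [subst, Ne.symm h]
  | const c => rfl

lemma fv_subst_subset (x : ℕ) (t u : Tm) : (Tm.subst x t u).fv ⊆ u.fv \ {x} ∪ t.fv := by
  cases u with
  | var w => by_cases h : w = x <;> simp [subst, h]
  | const c => simp [subst, fv]

end Tm

namespace Form

lemma fv_finite (A : Form P) : A.fv.Finite := by
  induction A with
  | atom p ts =>
    have : (atom p ts).fv = ⋃ t ∈ ts, t.fv := by ext; simp [fv]
    exact this ▸ ts.finite_toSet.biUnion fun t _ => by cases t <;> simp [Tm.fv]
  | imp _ _ ihA ihB | and _ _ ihA ihB | or _ _ ihA ihB => exact ihA.union ihB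
  | neg _ ihA => exact ihA
  | all _ _ ihA | ex _ _ ihA => exact ihA.sdiff
  | iq _ _ _ ihF ihG => exact (ihF.union ihG).sdiff

lemma bv_finite (A : Form P) : A.bv.Finite := by
  induction A with
  | atom => simp [bv]
  | imp _ _ ihA ihB | and _ _ ihA ihB | or _ _ ihA ihB => exact ihA.union ihB
  | neg _ ihA => exact ihA
  | all y _ ihA | ex y _ ihA => exact ihA.insert y
  | iq y _ _ ihF ihG => exact (ihF.union ihG).insert y

@[simp]
lemma bv_subst (x : ℕ) (t : Tm) (A : Form P) : (A.subst x t).bv = A.bv := by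
  induction A with
  | atom => simp [subst, bv]
  | imp _ _ ihA ihB | and _ _ ihA ihB | or _ _ ihA ihB => simp [subst, bv, ihA, ihB]
  | neg _ ihA => simp [subst, bv, ihA]
  | all y _ ihA | ex y _ ihA => by_cases h : y = x <;> simp [subst, bv, h, ihA]
  | iq y _ _ ihF ihG => by_cases h : y = x <;> simp [subst, bv, h, ihF, ihG]

lemma subst_var_self (x : ℕ) (A : Form P) : A.subst x (.var x) = A := by
  induction A with
  | atom p ts => simp [subst, funext (Tm.subst_var_self x)]
  | imp _ _ ihA ihB | and _ _ ihA ihB | or _ _ ihA ihB => simp [subst, ihA, ihB]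
  | neg _ ihA => simp [subst, ihA]
  | all y _ ihA | ex y _ ihA => by_cases h : y = x <;> simp [subst, h, ihA]
  | iq y _ _ ihF ihG => by_cases h : y = x <;> simp [subst, h, ihF, ihG]

lemma subst_of_notMem_fv {x : ℕ} {A : Form P} (h : x ∉ A.fv) (t : Tm) : A.subst x t = A := by
  induction A with
  | atom p ts =>
    simp only [fv, Set.mem_ofPred_eq, not_exists, not_and] at h
    simpa [subst] using List.map_congr_left fun u hu => Tm.subst_of_notMem_fv (h u hu) t
  | imp _ _ ihA ihB | and _ _ ihA ihB | or _ _ ihA ihB =>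
    simp only [fv, Set.mem_union, not_or] at h
    simp [subst, ihA h.1, ihB h.2]
  | neg _ ihA => simp [subst, ihA h]
  | all y _ ihA | ex y _ ihA =>
    by_cases hy : y = x
    · simp [subst, hy]
    · simp only [fv, Set.mem_sdiff, Set.mem_singleton_iff, not_and, not_not] at h
      simp [subst, hy, ihA fun hx => hy (h hx).symm]
  | iq y _ _ ihF ihG =>
    by_cases hy : y = x
    · simp [subst, hy]
    · simp only [fv, Set.mem_sdiff, Set.mem_union, Set.mem_singleton_iff, not_and, not_not] at h
      simp [subst, hy, ihF fun hx => hy (h (.inl hx)).symm, ihG fun hx => hy (h (.inr hx)).symm]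

lemma fv_subst_subset (x : ℕ) (t : Tm) (A : Form P) :
    (A.subst x t).fv ⊆ A.fv \ {x} ∪ t.fv := by
  induction A with
  | atom p ts =>
    rintro v ⟨_, hmap, hv⟩
    obtain ⟨u, hu, rfl⟩ := List.mem_map.1 hmap
    rcases Tm.fv_subst_subset x t u hv with ⟨hv, hvx⟩ | hv
    · exact .inl ⟨⟨u, hu, hv⟩, hvx⟩
    · exact .inr hv
  | imp _ _ ihA ihB | and _ _ ihA ihB | or _ _ ihA ihB =>
    intro v hv
    simp only [subst, fv] at hv ⊢
    grind
  | neg _ ihA => exact ihA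
  | all y _ ihA | ex y _ ihA =>
    by_cases h : y = x
    · subst h; simp [subst, fv]
    · intro v hv
      simp only [subst, h, if_false, fv] at hv ⊢
      grind
  | iq y _ _ ihF ihG =>
    by_cases h : y = x
    · subst h; simp [subst, fv]
    · intro v hv
      simp only [subst, h, if_false, fv] at hv ⊢
      grind

lemma notMem_fv_subst {v x : ℕ} {t : Tm} {A : Form P} (hA : v ∉ A.fv ∨ v = x)
    (ht : v ∉ t.fv) :
    v ∉ (A.subst x t).fv := fun hv => by
  rcases fv_subst_subset x t A hv with ⟨hvA, hvx⟩ | hvt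
  exacts [hA.elim (· hvA) hvx, ht hvt]

end Form

lemma freeFor_var_iff {z : ℕ} {A : Form P} : FreeFor (.var z) A ↔ z ∉ A.bv := by
  simp [FreeFor]

theorem N4.negIq_instance {eqp : P} {Γ : Set (Form P)} {F G : Form P} {x y : ℕ} {t : Tm}
    (h : N4 eqp Γ (Form.iq x F G).neg) (htF : FreeFor t F) (htG : FreeFor t G)
    (hyx : y ≠ x) (hyt : y ∉ t.fv) (hyF : y ∉ F.fv) (hyFb : y ∉ F.bv) (hyG : y ∉ G.fv)
    (hΓ : ∀ B ∈ Γ, y ∉ B.fv) :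
    N4 eqp Γ ((F.subst x t).neg.or
      ((Form.ex y ((F.subst x (.var y)).and (eqf eqp (.var y) t).neg)).or (G.subst x t).neg)) := by
  refine h.negiqE (y := y) (.orI1 (.hyp (Set.mem_insert _ _)))
    (.orI2 (.orI2 (.hyp (Set.mem_insert _ _)))) (.orI2 (.orI1 ?_)) htF htG hyx hyt hΓ ?_
  · refine N4.exI (t := .var y) ?_ (freeFor_var_iff.2 (by simpa [Form.bv, eqf] using hyFb))
    rw [Form.subst_var_self]
    exact .andI (.hyp (Set.mem_insert_of_mem _ (Set.mem_insert _ _))) (.hyp (Set.mem_insert _ _))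
  · simp [Form.fv, eqf, Form.notMem_fv_subst (.inl hyF) hyt, Form.notMem_fv_subst (.inl hyG) hyt]

end

/-- In Nelson's paraconsistent first-order logic N4 with identity,
`¬Ix[F,G] ⊢ ∀x(¬F ∨ ∃y(F[x:=y] ∧ ¬ y=x) ∨ ¬G)`, where `y` is a fresh variable. -/
theorem negIq_derives_quantified (x y : ℕ) (F G : Form ℕ)
    (hyx : y ≠ x) (hyF : y ∉ F.fv) (hyFb : y ∉ F.bv) (hyG : y ∉ G.fv) :
    N4 0 {(Form.iq x F G).neg} (negIqForm x y F G) := by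
  set Γ : Set (Form ℕ) := {(Form.iq x F G).neg}
  obtain ⟨z, hz⟩ := (F.fv_finite.union G.fv_finite |>.union (F.bv_finite.union G.bv_finite)
    |>.union (Set.toFinite {x, y})).exists_notMem
  simp only [Set.mem_union, Set.mem_insert_iff, Set.mem_singleton_iff, not_or] at hz
  obtain ⟨⟨⟨hzF, hzG⟩, hzFb, hzGb⟩, hzx, hzy⟩ := hz
  have hΓ : ∀ v, v ∉ F.fv → v ∉ G.fv → ∀ B ∈ Γ, v ∉ B.fv := by
    rintro v hvF hvG _ rfl
    simp [Form.fv, hvF, hvG]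
  have hxFy : x ∉ (F.subst x (.var y)).fv :=
    Form.notMem_fv_subst (.inr rfl) (by simpa using hyx.symm)
  have hzFy : z ∉ (F.subst x (.var y)).fv := Form.notMem_fv_subst (.inl hzF) (by simpa using hzy)
  refine N4.allI (y := z) ?_ (hΓ z hzF hzG) (.inr ?_)
  · simpa [Form.subst, eqf, Tm.subst, hyx, Form.subst_of_notMem_fv hxFy] using
      N4.negIq_instance (t := .var z) (N4.hyp (Set.mem_singleton _)) (freeFor_var_iff.2 hzFb)
        (freeFor_var_iff.2 hzGb) hyx (by simpa using Ne.symm hzy) hyF hyFb hyG (hΓ y hyF hyG)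
  · simp [Form.fv, eqf, hzF, hzG, hzx, hzFy]
end

section
/- In Nelson's first-order logic N4 with identity, Ix[F,G] and ∃x(F ∧ ∀y(F[x:=y] → y=x) ∧ G) are interderivable, i.e., each derives the other. -/
/-- Russell's analysis of `the F is G`:
`∃x(F ∧ ∀y(F[x:=y] → y=x) ∧ G)`. -/
def russell (x y : ℕ) (F G : Form ℕ) : Form ℕ :=
  .ex x (F.and ((Form.all y ((F.subst x (.var y)).imp (eqf 0 (.var y) (.var x)))).and G))


-- Auxiliary lemmas ------------------------------------------------------

lemma Tm.subst_self (x : ℕ) (u : Tm) : Tm.subst x (.var x) u = u := by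
  cases u with
  | var y => simp only [Tm.subst]; split <;> simp_all
  | const c => rfl

lemma Form.subst_self {P : Type} (x : ℕ) (A : Form P) : A.subst x (.var x) = A := by
  induction A with
  | atom p ts =>
      simp only [Form.subst]
      rw [List.map_congr_left (fun u _ => Tm.subst_self x u), List.map_id']
  | imp A B ihA ihB => simp [Form.subst, ihA, ihB]
  | and A B ihA ihB => simp [Form.subst, ihA, ihB]
  | or A B ihA ihB => simp [Form.subst, ihA, ihB]
  | neg A ihA => simp [Form.subst, ihA]
  | all y A ihA => simp only [Form.subst]; split <;> simp [ihA]
  | ex y A ihA => simp only [Form.subst]; split <;> simp [ihA]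
  | iq y F G ihF ihG => simp only [Form.subst]; split <;> simp [ihF, ihG]

lemma Tm.subst_notfree {x : ℕ} {t u : Tm} (h : x ∉ u.fv) : Tm.subst x t u = u := by
  cases u with
  | var y => simp [Tm.fv] at h; simp [Tm.subst, Ne.symm h]
  | const c => rfl

lemma Form.subst_notfree {P : Type} {x : ℕ} {t : Tm} {A : Form P} (h : x ∉ A.fv) :
    A.subst x t = A := by
  induction A with
  | atom p ts =>
      simp only [Form.fv, Set.mem_setOf_eq, not_exists] at h
      simp only [Form.subst]
      rw [List.map_congr_left
        (fun u hu => Tm.subst_notfree (t := t) (by intro hx; exact (h u) ⟨hu, hx⟩)), List.map_id']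
  | imp A B ihA ihB =>
      simp [Form.fv] at h; simp [Form.subst, ihA h.1, ihB h.2]
  | and A B ihA ihB =>
      simp [Form.fv] at h; simp [Form.subst, ihA h.1, ihB h.2]
  | or A B ihA ihB =>
      simp [Form.fv] at h; simp [Form.subst, ihA h.1, ihB h.2]
  | neg A ihA => simp [Form.fv] at h; simp [Form.subst, ihA h]
  | all y A ihA =>
      simp only [Form.subst]; split
      · rfl
      · rename_i hne
        simp [Form.fv, Set.mem_diff] at h
        exact congrArg _ (ihA (fun hx => hne (h hx).symm))
  | ex y A ihA =>
      simp only [Form.subst]; split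
      · rfl
      · rename_i hne
        simp [Form.fv, Set.mem_diff] at h
        exact congrArg _ (ihA (fun hx => hne (h hx).symm))
  | iq y F G ihF ihG =>
      simp only [Form.subst]; split
      · rfl
      · rename_i hne
        simp only [Form.fv, Set.mem_diff, Set.mem_union, Set.mem_singleton_iff, not_and, not_not] at h
        rw [ihF (fun hx => hne (h (Or.inl hx)).symm), ihG (fun hx => hne (h (Or.inr hx)).symm)]

lemma Tm.fv_subst {x v : ℕ} {t u : Tm} (h : v ∈ (Tm.subst x t u).fv) :
    (v ∈ u.fv ∧ v ≠ x) ∨ v ∈ t.fv := by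
  cases u with
  | var y =>
      simp only [Tm.subst] at h
      split at h
      · exact Or.inr h
      · rename_i hne; simp [Tm.fv] at h ⊢; subst h; exact Or.inl ⟨rfl, hne⟩
  | const c => simp [Tm.subst, Tm.fv] at h

lemma Form.fv_subst {P : Type} {x v : ℕ} {t : Tm} {A : Form P}
    (h : v ∈ (A.subst x t).fv) : (v ∈ A.fv ∧ v ≠ x) ∨ v ∈ t.fv := by
  induction A with
  | atom p ts =>
      simp only [Form.subst, Form.fv, Set.mem_setOf_eq, List.mem_map] at h ⊢
      obtain ⟨u, ⟨w, hw, rfl⟩, hv⟩ := h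
      rcases Tm.fv_subst hv with ⟨h1, h2⟩ | h1
      · exact Or.inl ⟨⟨w, hw, h1⟩, h2⟩
      · exact Or.inr h1
  | imp A B ihA ihB =>
      simp only [Form.subst, Form.fv, Set.mem_union] at h ⊢
      rcases h with h | h
      · rcases ihA h with ⟨h1, h2⟩ | h1
        · exact Or.inl ⟨Or.inl h1, h2⟩
        · exact Or.inr h1
      · rcases ihB h with ⟨h1, h2⟩ | h1
        · exact Or.inl ⟨Or.inr h1, h2⟩
        · exact Or.inr h1
  | and A B ihA ihB =>
      simp only [Form.subst, Form.fv, Set.mem_union] at h ⊢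
      rcases h with h | h
      · rcases ihA h with ⟨h1, h2⟩ | h1
        · exact Or.inl ⟨Or.inl h1, h2⟩
        · exact Or.inr h1
      · rcases ihB h with ⟨h1, h2⟩ | h1
        · exact Or.inl ⟨Or.inr h1, h2⟩
        · exact Or.inr h1
  | or A B ihA ihB =>
      simp only [Form.subst, Form.fv, Set.mem_union] at h ⊢
      rcases h with h | h
      · rcases ihA h with ⟨h1, h2⟩ | h1
        · exact Or.inl ⟨Or.inl h1, h2⟩
        · exact Or.inr h1
      · rcases ihB h with ⟨h1, h2⟩ | h1
        · exact Or.inl ⟨Or.inr h1, h2⟩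
        · exact Or.inr h1
  | neg A ihA => exact ihA h
  | all y A ihA =>
      simp only [Form.subst] at h
      split at h
      · rename_i heq; subst heq
        simp only [Form.fv, Set.mem_diff, Set.mem_singleton_iff] at h ⊢
        exact Or.inl ⟨h, fun hv => h.2 hv⟩
      · rename_i hne
        simp only [Form.fv, Set.mem_diff, Set.mem_singleton_iff] at h ⊢
        rcases ihA h.1 with ⟨h1, h2⟩ | h1
        · exact Or.inl ⟨⟨h1, h.2⟩, h2⟩
        · exact Or.inr h1
  | ex y A ihA =>
      simp only [Form.subst] at h
      split at h
      · rename_i heq; subst heq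
        simp only [Form.fv, Set.mem_diff, Set.mem_singleton_iff] at h ⊢
        exact Or.inl ⟨h, fun hv => h.2 hv⟩
      · rename_i hne
        simp only [Form.fv, Set.mem_diff, Set.mem_singleton_iff] at h ⊢
        rcases ihA h.1 with ⟨h1, h2⟩ | h1
        · exact Or.inl ⟨⟨h1, h.2⟩, h2⟩
        · exact Or.inr h1
  | iq y F G ihF ihG =>
      simp only [Form.subst] at h
      split at h
      · rename_i heq; subst heq
        simp only [Form.fv, Set.mem_diff, Set.mem_singleton_iff] at h ⊢
        exact Or.inl ⟨h, fun hv => h.2 hv⟩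
      · rename_i hne
        simp only [Form.fv, Set.mem_diff, Set.mem_union, Set.mem_singleton_iff] at h ⊢
        rcases h.1 with hF | hG
        · rcases ihF hF with ⟨h1, h2⟩ | h1
          · exact Or.inl ⟨⟨Or.inl h1, h.2⟩, h2⟩
          · exact Or.inr h1
        · rcases ihG hG with ⟨h1, h2⟩ | h1
          · exact Or.inl ⟨⟨Or.inr h1, h.2⟩, h2⟩
          · exact Or.inr h1

lemma Form.bv_subst_s2 {P : Type} (x : ℕ) (t : Tm) (A : Form P) :
    (A.subst x t).bv = A.bv := by
  induction A with
  | atom p ts => rfl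
  | imp A B ihA ihB => simp [Form.subst, Form.bv, ihA, ihB]
  | and A B ihA ihB => simp [Form.subst, Form.bv, ihA, ihB]
  | or A B ihA ihB => simp [Form.subst, Form.bv, ihA, ihB]
  | neg A ihA => simp [Form.subst, Form.bv, ihA]
  | all y A ihA => simp only [Form.subst]; split <;> simp [Form.bv, ihA]
  | ex y A ihA => simp only [Form.subst]; split <;> simp [Form.bv, ihA]
  | iq y F G ihF ihG => simp only [Form.subst]; split <;> simp [Form.bv, ihF, ihG]

/-- All variables (free or bound) occurring in a term. -/
def Tm.vars : Tm → Finset ℕ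
  | .var y => {y}
  | .const _ => ∅

/-- All variables (free or bound) occurring in a formula. -/
def Form.vars {P : Type} : Form P → Finset ℕ
  | .atom _ ts => ts.foldr (fun t s => t.vars ∪ s) ∅
  | .imp A B => A.vars ∪ B.vars
  | .and A B => A.vars ∪ B.vars
  | .or A B => A.vars ∪ B.vars
  | .neg A => A.vars
  | .all y A => insert y A.vars
  | .ex y A => insert y A.vars
  | .iq y F G => insert y (F.vars ∪ G.vars)

lemma Form.fv_subset_vars {P : Type} (A : Form P) : A.fv ⊆ ↑A.vars := by
  induction A with
  | atom p ts =>
      intro v hv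
      simp only [Form.fv, Set.mem_setOf_eq] at hv
      obtain ⟨t, ht, hvt⟩ := hv
      simp only [Form.vars]
      induction ts with
      | nil => simp at ht
      | cons u us ih =>
          simp only [List.foldr_cons, Finset.coe_union, Set.mem_union]
          rcases List.mem_cons.mp ht with rfl | ht'
          · left
            cases t with
            | var w => simp [Tm.fv] at hvt; simp [Tm.vars, hvt]
            | const c => simp [Tm.fv] at hvt
          · exact Or.inr (ih ht')
  | imp A B ihA ihB =>
      intro v hv
      rcases hv with h | h
      · exact Finset.mem_union.mpr (Or.inl (ihA h))
      · exact Finset.mem_union.mpr (Or.inr (ihB h))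
  | and A B ihA ihB =>
      intro v hv
      rcases hv with h | h
      · exact Finset.mem_union.mpr (Or.inl (ihA h))
      · exact Finset.mem_union.mpr (Or.inr (ihB h))
  | or A B ihA ihB =>
      intro v hv
      rcases hv with h | h
      · exact Finset.mem_union.mpr (Or.inl (ihA h))
      · exact Finset.mem_union.mpr (Or.inr (ihB h))
  | neg A ihA => exact ihA
  | all y A ihA =>
      intro v hv
      exact Finset.mem_insert.mpr (Or.inr (ihA hv.1))
  | ex y A ihA =>
      intro v hv
      exact Finset.mem_insert.mpr (Or.inr (ihA hv.1))
  | iq y F G ihF ihG =>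
      intro v hv
      rcases hv.1 with h | h
      · exact Finset.mem_insert.mpr (Or.inr (Finset.mem_union.mpr (Or.inl (ihF h))))
      · exact Finset.mem_insert.mpr (Or.inr (Finset.mem_union.mpr (Or.inr (ihG h))))

lemma Form.bv_subset_vars {P : Type} (A : Form P) : A.bv ⊆ ↑A.vars := by
  induction A with
  | atom p ts => intro v hv; simp [Form.bv] at hv
  | imp A B ihA ihB =>
      intro v hv
      rcases hv with h | h
      · exact Finset.mem_union.mpr (Or.inl (ihA h))
      · exact Finset.mem_union.mpr (Or.inr (ihB h))
  | and A B ihA ihB =>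
      intro v hv
      rcases hv with h | h
      · exact Finset.mem_union.mpr (Or.inl (ihA h))
      · exact Finset.mem_union.mpr (Or.inr (ihB h))
  | or A B ihA ihB =>
      intro v hv
      rcases hv with h | h
      · exact Finset.mem_union.mpr (Or.inl (ihA h))
      · exact Finset.mem_union.mpr (Or.inr (ihB h))
  | neg A ihA => exact ihA
  | all y A ihA =>
      intro v hv
      rcases hv with rfl | h
      · exact Finset.mem_insert_self _ _
      · exact Finset.mem_insert.mpr (Or.inr (ihA h))
  | ex y A ihA =>
      intro v hv
      rcases hv with rfl | h
      · exact Finset.mem_insert_self _ _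
      · exact Finset.mem_insert.mpr (Or.inr (ihA h))
  | iq y F G ihF ihG =>
      intro v hv
      rcases hv with rfl | h
      · exact Finset.mem_insert_self _ _
      · rcases h with h | h
        · exact Finset.mem_insert.mpr (Or.inr (Finset.mem_union.mpr (Or.inl (ihF h))))
        · exact Finset.mem_insert.mpr (Or.inr (Finset.mem_union.mpr (Or.inr (ihG h))))

/-- In Nelson's first-order logic N4 with identity, `Ix[F,G]` and
`∃x(F ∧ ∀y(F[x:=y] → y=x) ∧ G)` are interderivable (each derives the other),
for a fresh variable `y`. -/
theorem iq_interderivable_russell (x y : ℕ) (F G : Form ℕ)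
    (hyx : y ≠ x) (hyF : y ∉ F.fv) (hyFb : y ∉ F.bv) (hyG : y ∉ G.fv) :
    N4 0 {Form.iq x F G} (russell x y F G) ∧
    N4 0 {russell x y F G} (Form.iq x F G) := by
  classical
  obtain ⟨z, hz⟩ := Infinite.exists_notMem_finset (insert x (insert y (F.vars ∪ G.vars)))
  simp only [Finset.mem_insert, Finset.mem_union, not_or] at hz
  obtain ⟨hzx, hzy, hzFv, hzGv⟩ := hz
  have hzF : z ∉ F.fv := fun h => hzFv (F.fv_subset_vars h)
  have hzFb : z ∉ F.bv := fun h => hzFv (F.bv_subset_vars h)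
  have hzG : z ∉ G.fv := fun h => hzGv (G.fv_subset_vars h)
  have hzGb : z ∉ G.bv := fun h => hzGv (G.bv_subset_vars h)
  -- abbreviation facts
  have hxFy : x ∉ (F.subst x (Tm.var y)).fv := by
    intro h
    rcases Form.fv_subst h with ⟨_, h2⟩ | h1
    · exact h2 rfl
    · exact hyx (show x = y by simpa [Tm.fv] using h1).symm
  have hAz : Form.subst x (Tm.var z) (F.and ((Form.all y ((F.subst x (Tm.var y)).imp (eqf 0 (Tm.var y) (Tm.var x)))).and G)) = ((F.subst x (Tm.var z)).and ((Form.all y ((F.subst x (Tm.var y)).imp (eqf 0 (Tm.var y) (Tm.var z)))).and (G.subst x (Tm.var z)))) := by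
    simp [Form.subst, Tm.subst, eqf, hyx, Form.subst_notfree hxFy]
  have hfvA : ∀ v ∈ ((F.and ((Form.all y ((F.subst x (Tm.var y)).imp (eqf 0 (Tm.var y) (Tm.var x)))).and G)) : Form ℕ).fv, v = x ∨ (v ∈ F.fv ∨ v ∈ G.fv) := by
    intro v hv
    rcases hv with h | h
    · exact Or.inr (Or.inl h)
    rcases h with h | h
    · obtain ⟨h1, hvy⟩ := h
      rcases h1 with h | h
      · rcases Form.fv_subst h with ⟨h2, _⟩ | h2
        · exact Or.inr (Or.inl h2)
        · exact absurd (by simpa [Tm.fv] using h2) hvy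
      · rcases (by simpa [eqf, Form.fv, Tm.fv] using h : v = y ∨ v = x) with h2 | h2
        · exact absurd h2 hvy
        · exact Or.inl h2
    · exact Or.inr (Or.inr h)
  have hzA : z ∉ ((F.and ((Form.all y ((F.subst x (Tm.var y)).imp (eqf 0 (Tm.var y) (Tm.var x)))).and G)) : Form ℕ).fv := by
    intro h; rcases hfvA z h with h | h | h
    · exact hzx h
    · exact hzF h
    · exact hzG h
  have hzR : z ∉ (russell x y F G).fv := fun h => hzA h.1
  have hyR : y ∉ (russell x y F G).fv := by
    intro h
    rcases hfvA y h.1 with h2 | h2 | h2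
    · exact hyx h2
    · exact hyF h2
    · exact hyG h2
  have hziq : z ∉ (Form.iq x F G).fv := by
    intro h
    rcases h.1 with h2 | h2
    · exact hzF h2
    · exact hzG h2
  have hyiq : y ∉ (Form.iq x F G).fv := by
    intro h
    rcases h.1 with h2 | h2
    · exact hyF h2
    · exact hyG h2
  have hyFz : y ∉ ((F.subst x (Tm.var z)) : Form ℕ).fv := by
    intro h
    rcases Form.fv_subst h with ⟨h2, _⟩ | h2
    · exact hyF h2
    · exact hzy (show y = z by simpa [Tm.fv] using h2).symm
  have hyGz : y ∉ ((G.subst x (Tm.var z)) : Form ℕ).fv := by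
    intro h
    rcases Form.fv_subst h with ⟨h2, _⟩ | h2
    · exact hyG h2
    · exact hzy (show y = z by simpa [Tm.fv] using h2).symm
  have hyAz : y ∉ (((F.subst x (Tm.var z)).and ((Form.all y ((F.subst x (Tm.var y)).imp (eqf 0 (Tm.var y) (Tm.var z)))).and (G.subst x (Tm.var z)))) : Form ℕ).fv := by
    intro h
    rcases h with h | h
    · exact hyFz h
    rcases h with h | h
    · exact h.2 rfl
    · exact hyGz h
  have ffzF : FreeFor (Tm.var z) F := by
    intro v hv; rcases (by simpa [Tm.fv] using hv : v = z) with rfl; exact hzFb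
  have ffzG : FreeFor (Tm.var z) G := by
    intro v hv; rcases (by simpa [Tm.fv] using hv : v = z) with rfl; exact hzGb
  have ffyF : FreeFor (Tm.var y) F := by
    intro v hv; rcases (by simpa [Tm.fv] using hv : v = y) with rfl; exact hyFb
  have ffzA : FreeFor (Tm.var z) ((F.and ((Form.all y ((F.subst x (Tm.var y)).imp (eqf 0 (Tm.var y) (Tm.var x)))).and G)) : Form ℕ) := by
    intro v hv
    rcases (by simpa [Tm.fv] using hv : v = z) with rfl
    intro h
    rcases h with h | h
    · exact hzFb h
    rcases h with h | h
    · rcases h with h | h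
      · exact hzy h
      rcases h with h | h
      · exact hzFb (by rw [Form.bv_subst_s2] at h; exact h)
      · simp [eqf, Form.bv] at h
    · exact hzGb h
  have ffyImp : FreeFor (Tm.var y) (((F.subst x (Tm.var y)) : Form ℕ).imp (eqf 0 (Tm.var y) (Tm.var z))) := by
    intro v hv
    rcases (by simpa [Tm.fv] using hv : v = y) with rfl
    intro h
    rcases h with h | h
    · exact hyFb (by rw [Form.bv_subst_s2] at h; exact h)
    · simp [eqf, Form.bv] at h
  have hruss : russell x y F G = Form.ex x (F.and ((Form.all y ((F.subst x (Tm.var y)).imp (eqf 0 (Tm.var y) (Tm.var x)))).and G)) := rfl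
  constructor
  · -- direction 1 : from Ix[F,G] to russell
    apply N4.iqE1 (F := F) (G := G) (x := x) (y := z) (N4.hyp (Set.mem_singleton _)) ?_ hzR
        (by intro B hB; rcases hB with rfl; exact hziq) (Or.inr ⟨hzF, hzG⟩)
    rw [hruss]
    apply N4.exI (t := Tm.var z) _ ffzA
    rw [hAz]
    refine N4.andI (N4.hyp (by simp)) (N4.andI ?_ (N4.hyp (by simp)))
    apply N4.allI (x := y) (y := y) ?_ ?_ (Or.inl rfl)
    · rw [Form.subst_self]
      apply N4.impI
      exact N4.iqE2 (x := x) (G := G) (N4.hyp (by simp)) (N4.hyp (by simp)) (N4.hyp (by simp)) ffyF ffzF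
    · intro B hB
      rcases hB with rfl | hB
      · exact hyGz
      rcases hB with rfl | hB
      · exact hyFz
      rcases hB with rfl
      exact hyiq
  · -- direction 2 : from russell to Ix[F,G]
    apply N4.exE (A := (F.and ((Form.all y ((F.subst x (Tm.var y)).imp (eqf 0 (Tm.var y) (Tm.var x)))).and G))) (x := x) (y := z) (N4.hyp (Set.mem_singleton _)) ?_ hziq
        (by intro B hB; rcases hB with rfl; exact hzR) (Or.inr hzA)
    rw [hAz]
    have hconj : N4 0 (insert (((F.subst x (Tm.var z)).and ((Form.all y ((F.subst x (Tm.var y)).imp (eqf 0 (Tm.var y) (Tm.var z)))).and (G.subst x (Tm.var z)))) : Form ℕ) {russell x y F G}) ((F.subst x (Tm.var z)).and ((Form.all y ((F.subst x (Tm.var y)).imp (eqf 0 (Tm.var y) (Tm.var z)))).and (G.subst x (Tm.var z)))) := N4.hyp (by simp)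
    apply N4.iqI (t := Tm.var z) (y := y) (N4.andE1 hconj)
        (N4.andE2 (N4.andE2 hconj)) ?_ ffzF ffzG hyx
        (by simp [Tm.fv]; exact Ne.symm hzy) ?_
    · have hall : N4 0 (insert ((F.subst x (Tm.var y)) : Form ℕ) (insert (((F.subst x (Tm.var z)).and ((Form.all y ((F.subst x (Tm.var y)).imp (eqf 0 (Tm.var y) (Tm.var z)))).and (G.subst x (Tm.var z)))) : Form ℕ) {russell x y F G}))
          (Form.all y (((F.subst x (Tm.var y)) : Form ℕ).imp (eqf 0 (Tm.var y) (Tm.var z)))) := by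
        have hconj2 : N4 0 (insert ((F.subst x (Tm.var y)) : Form ℕ) (insert (((F.subst x (Tm.var z)).and ((Form.all y ((F.subst x (Tm.var y)).imp (eqf 0 (Tm.var y) (Tm.var z)))).and (G.subst x (Tm.var z)))) : Form ℕ) {russell x y F G})) (((F.subst x (Tm.var z)).and ((Form.all y ((F.subst x (Tm.var y)).imp (eqf 0 (Tm.var y) (Tm.var z)))).and (G.subst x (Tm.var z)))) : Form ℕ) := N4.hyp (by simp)
        exact N4.andE1 (N4.andE2 hconj2)
      have h2 := N4.allE hall ffyImp
      rw [Form.subst_self] at h2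
      exact N4.impE h2 (N4.hyp (by simp))
    · intro B hB
      rcases hB with rfl | hB
      · exact hyAz
      rcases hB with rfl
      exact hyR
end

section
/- Given any Nelsonian Kripke structure N = ⟨W,R,H,D,E,J,φ⟩ with paradefinite valuation ⊩ᴺ, define an intuitionistic Kripke structure I on the same frame with the same domains, interpreting each predicate P as φ(P) and each fresh primed predicate P′ as φ(¬P). Then for every world w and every formula C of Nelson's language, N,w ⊩ᴺ C if and only if I,w ⊩ᴵ τ(C), where τ is the strong-negation translation. -/
/-- Formulas of Nelson's language `L¬` (primitive strong negation `neg`).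
Identity is a distinguished predicate symbol (`eqp` below); in the free case the
existence predicate is a further distinguished predicate symbol (`exn` below). -/
inductive FormN (P : Type) where
  | atom : P → List Tm → FormN P
  | imp : FormN P → FormN P → FormN P
  | and : FormN P → FormN P → FormN P
  | or  : FormN P → FormN P → FormN P
  | neg : FormN P → FormN P
  | all : ℕ → FormN P → FormN P
  | ex  : ℕ → FormN P → FormN P

/-- Formulas of the intuitionistic language `L⊥` (falsum `bot` instead of `neg`). -/
inductive FormI (P : Type) where
  | atom : P → List Tm → FormI P
  | bot : FormI P
  | imp : FormI P → FormI P → FormI P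
  | and : FormI P → FormI P → FormI P
  | or  : FormI P → FormI P → FormI P
  | all : ℕ → FormI P → FormI P
  | ex  : ℕ → FormI P → FormI P

def FormN.subst {P : Type} (x : ℕ) (t : Tm) : FormN P → FormN P
  | .atom p ts => .atom p (ts.map (Tm.subst x t))
  | .imp A B => .imp (A.subst x t) (B.subst x t)
  | .and A B => .and (A.subst x t) (B.subst x t)
  | .or A B => .or (A.subst x t) (B.subst x t)
  | .neg A => .neg (A.subst x t)
  | .all y A => if y = x then .all y A else .all y (A.subst x t)
  | .ex y A => if y = x then .ex y A else .ex y (A.subst x t)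

def FormN.fv {P : Type} : FormN P → Set ℕ
  | .atom _ ts => {y | ∃ t ∈ ts, y ∈ t.fv}
  | .imp A B => A.fv ∪ B.fv
  | .and A B => A.fv ∪ B.fv
  | .or A B => A.fv ∪ B.fv
  | .neg A => A.fv
  | .all y A => A.fv \ {y}
  | .ex y A => A.fv \ {y}

def FormN.bv {P : Type} : FormN P → Set ℕ
  | .atom _ _ => ∅
  | .imp A B => A.bv ∪ B.bv
  | .and A B => A.bv ∪ B.bv
  | .or A B => A.bv ∪ B.bv
  | .neg A => A.bv
  | .all y A => insert y A.bv
  | .ex y A => insert y A.bv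

def FormI.subst {P : Type} (x : ℕ) (t : Tm) : FormI P → FormI P
  | .atom p ts => .atom p (ts.map (Tm.subst x t))
  | .bot => .bot
  | .imp A B => .imp (A.subst x t) (B.subst x t)
  | .and A B => .and (A.subst x t) (B.subst x t)
  | .or A B => .or (A.subst x t) (B.subst x t)
  | .all y A => if y = x then .all y A else .all y (A.subst x t)
  | .ex y A => if y = x then .ex y A else .ex y (A.subst x t)

def FormI.fv {P : Type} : FormI P → Set ℕ
  | .atom _ ts => {y | ∃ t ∈ ts, y ∈ t.fv}
  | .bot => ∅
  | .imp A B => A.fv ∪ B.fv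
  | .and A B => A.fv ∪ B.fv
  | .or A B => A.fv ∪ B.fv
  | .all y A => A.fv \ {y}
  | .ex y A => A.fv \ {y}

def FormI.bv {P : Type} : FormI P → Set ℕ
  | .atom _ _ => ∅
  | .bot => ∅
  | .imp A B => A.bv ∪ B.bv
  | .and A B => A.bv ∪ B.bv
  | .or A B => A.bv ∪ B.bv
  | .all y A => insert y A.bv
  | .ex y A => insert y A.bv

def FreeForN {P : Type} (t : Tm) (A : FormN P) : Prop := ∀ v ∈ t.fv, v ∉ A.bv
def FreeForI {P : Type} (t : Tm) (A : FormI P) : Prop := ∀ v ∈ t.fv, v ∉ A.bv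

/-- The Gurevich–Rautenberg–Vorob'ev strong-negation translation `τ` from
Nelson's language (predicate letters `ℕ`) into the intuitionistic language
extended with a fresh primed copy of each predicate letter (`Sum.inr p` is `p′`);
negated atoms go to primed atoms, `τ` commutes with the positive connectives and
quantifiers, and negation is pushed through compounds constructively. -/
def tau : FormN ℕ → FormI (ℕ ⊕ ℕ)
  | .atom p ts => .atom (.inl p) ts
  | .imp A B => .imp (tau A) (tau B)
  | .and A B => .and (tau A) (tau B)
  | .or A B => .or (tau A) (tau B)
  | .all x A => .all x (tau A)
  | .ex x A => .ex x (tau A)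
  | .neg (.atom p ts) => .atom (.inr p) ts
  | .neg (.neg A) => tau A
  | .neg (.imp A B) => .and (tau A) (tau (.neg B))
  | .neg (.and A B) => .or (tau (.neg A)) (tau (.neg B))
  | .neg (.or A B) => .and (tau (.neg A)) (tau (.neg B))
  | .neg (.all x A) => .ex x (tau (.neg A))
  | .neg (.ex x A) => .all x (tau (.neg A))

/-- A Nelsonian Kripke structure (over predicate letters `P`, with identity
predicate `eqd`): a reflexive transitive frame with increasing nonempty domains
and persistent, independent positive (`pos`) and negative (`nneg`) extensions
of every predicate letter; the positive extension of identity is the diagonal. -/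
structure NModel (P : Type) (eqd : P) where
  W : Type
  w0 : W
  R : W → W → Prop
  refl : ∀ w, R w w
  trans : ∀ {w₁ w₂ w₃}, R w₁ w₂ → R w₂ w₃ → R w₁ w₃
  D : Type
  cval : ℕ → D
  Dw : W → Set D
  Dw_ne : ∀ w, (Dw w).Nonempty
  Dw_mono : ∀ {w w'}, R w w' → Dw w ⊆ Dw w'
  pos : W → P → List D → Prop
  nneg : W → P → List D → Prop
  pos_mono : ∀ {w w'} (p : P) (ds : List D), R w w' → pos w p ds → pos w' p ds
  nneg_mono : ∀ {w w'} (p : P) (ds : List D), R w w' → nneg w p ds → nneg w' p ds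
  eq_pos : ∀ w d e, pos w eqd [d, e] ↔ (d = e ∧ d ∈ Dw w)

variable {P : Type}

/-- Value of a term under an assignment of the variables. -/
def NModel.tval {e : P} (M : NModel P e) (ρ : ℕ → M.D) : Tm → M.D
  | .var x => ρ x
  | .const c => M.cval c

/-- Update of an assignment. -/
def upd {D : Type} (ρ : ℕ → D) (x : ℕ) (d : D) : ℕ → D :=
  fun z => if z = x then d else ρ z

/-- The Nelsonian paradefinite valuation: `force true` is truth (`⊩ᴺ A`) and
`force false` is falsity (`⊩ᴺ ¬A`), with the intuitionistic positive clauses and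
the constructive negative clauses. -/
def NModel.force {e : P} (M : NModel P e) : Bool → FormN P → M.W → (ℕ → M.D) → Prop
  | true, .atom p ts, w, ρ => M.pos w p (ts.map (M.tval ρ))
  | false, .atom p ts, w, ρ => M.nneg w p (ts.map (M.tval ρ))
  | b, .neg A, w, ρ => M.force (!b) A w ρ
  | true, .and A B, w, ρ => M.force true A w ρ ∧ M.force true B w ρ
  | false, .and A B, w, ρ => M.force false A w ρ ∨ M.force false B w ρ
  | true, .or A B, w, ρ => M.force true A w ρ ∨ M.force true B w ρ
  | false, .or A B, w, ρ => M.force false A w ρ ∧ M.force false B w ρ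
  | true, .imp A B, w, ρ =>
      ∀ w', M.R w w' → M.force true A w' ρ → M.force true B w' ρ
  | false, .imp A B, w, ρ => M.force true A w ρ ∧ M.force false B w ρ
  | true, .all x A, w, ρ =>
      ∀ w', M.R w w' → ∀ d ∈ M.Dw w', M.force true A w' (upd ρ x d)
  | false, .all x A, w, ρ => ∃ d ∈ M.Dw w, M.force false A w (upd ρ x d)
  | true, .ex x A, w, ρ => ∃ d ∈ M.Dw w, M.force true A w (upd ρ x d)
  | false, .ex x A, w, ρ =>
      ∀ w', M.R w w' → ∀ d ∈ M.Dw w', M.force false A w' (upd ρ x d)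

/-- An intuitionistic Kripke structure (over predicate letters `P`, with identity
predicate `eqd`): persistent interpretations of the predicates over a reflexive
transitive frame with increasing nonempty domains. -/
structure IModel (P : Type) (eqd : P) where
  W : Type
  w0 : W
  R : W → W → Prop
  refl : ∀ w, R w w
  trans : ∀ {w₁ w₂ w₃}, R w₁ w₂ → R w₂ w₃ → R w₁ w₃
  D : Type
  cval : ℕ → D
  Dw : W → Set D
  Dw_ne : ∀ w, (Dw w).Nonempty
  Dw_mono : ∀ {w w'}, R w w' → Dw w ⊆ Dw w'
  pos : W → P → List D → Prop
  pos_mono : ∀ {w w'} (p : P) (ds : List D), R w w' → pos w p ds → pos w' p ds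
  eq_pos : ∀ w d e, pos w eqd [d, e] ↔ (d = e ∧ d ∈ Dw w)

def IModel.tval {P : Type} {e : P} (M : IModel P e) (ρ : ℕ → M.D) : Tm → M.D
  | .var x => ρ x
  | .const c => M.cval c

/-- Intuitionistic Kripke forcing. -/
def IModel.iforce {P : Type} {e : P} (M : IModel P e) :
    FormI P → M.W → (ℕ → M.D) → Prop
  | .atom p ts, w, ρ => M.pos w p (ts.map (M.tval ρ))
  | .bot, _, _ => False
  | .and A B, w, ρ => M.iforce A w ρ ∧ M.iforce B w ρ
  | .or A B, w, ρ => M.iforce A w ρ ∨ M.iforce B w ρ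
  | .imp A B, w, ρ => ∀ w', M.R w w' → M.iforce A w' ρ → M.iforce B w' ρ
  | .all x A, w, ρ => ∀ w', M.R w w' → ∀ d ∈ M.Dw w', M.iforce A w' (upd ρ x d)
  | .ex x A, w, ρ => ∃ d ∈ M.Dw w, M.iforce A w (upd ρ x d)

/-- The intuitionistic companion structure of a Nelsonian structure: same frame
and domains; each predicate `P` is interpreted by `φ(P)` and each fresh primed
predicate `P′` (i.e. `Sum.inr P`) by `φ(¬P)`. -/
def mkI (M : NModel ℕ 0) : IModel (ℕ ⊕ ℕ) (Sum.inl 0) where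
  W := M.W
  w0 := M.w0
  R := M.R
  refl := M.refl
  trans := M.trans
  D := M.D
  cval := M.cval
  Dw := M.Dw
  Dw_ne := M.Dw_ne
  Dw_mono := M.Dw_mono
  pos := fun w p ds => Sum.elim (fun q => M.pos w q ds) (fun q => M.nneg w q ds) p
  pos_mono := by
    intro w w' p ds h hp
    cases p with
    | inl q => exact M.pos_mono q ds h hp
    | inr q => exact M.nneg_mono q ds h hp
  eq_pos := fun w d e => M.eq_pos w d e

lemma tval_mkI (M : NModel ℕ 0) (ρ : ℕ → M.D) : (mkI M).tval ρ = M.tval ρ := by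
  funext t; cases t <;> rfl

lemma nelson_aux (M : NModel ℕ 0) (C : FormN ℕ) :
    ∀ (w : M.W) (ρ : ℕ → M.D),
      (M.force true C w ρ ↔ (mkI M).iforce (tau C) w ρ) ∧
      (M.force false C w ρ ↔ (mkI M).iforce (tau (.neg C)) w ρ) := by
  induction C with
  | atom p ts =>
      intro w ρ
      refine ⟨?_, ?_⟩ <;>
        simp only [NModel.force, tau, IModel.iforce, tval_mkI] <;> exact Iff.rfl
  | imp A B ihA ihB =>
      intro w ρ
      constructor
      · simp only [NModel.force, tau, IModel.iforce]
        constructor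
        · intro h w' hr ha
          exact ((ihB w' ρ).1).mp (h w' hr (((ihA w' ρ).1).mpr ha))
        · intro h w' hr ha
          exact ((ihB w' ρ).1).mpr (h w' hr (((ihA w' ρ).1).mp ha))
      · simp only [NModel.force, tau, IModel.iforce]
        exact and_congr ((ihA w ρ).1) ((ihB w ρ).2)
  | and A B ihA ihB =>
      intro w ρ
      refine ⟨?_, ?_⟩ <;> simp only [NModel.force, tau, IModel.iforce]
      · exact and_congr ((ihA w ρ).1) ((ihB w ρ).1)
      · exact or_congr ((ihA w ρ).2) ((ihB w ρ).2)
  | or A B ihA ihB =>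
      intro w ρ
      refine ⟨?_, ?_⟩ <;> simp only [NModel.force, tau, IModel.iforce]
      · exact or_congr ((ihA w ρ).1) ((ihB w ρ).1)
      · exact and_congr ((ihA w ρ).2) ((ihB w ρ).2)
  | neg A ihA =>
      intro w ρ
      refine ⟨?_, ?_⟩ <;> simp only [NModel.force, tau, Bool.not_true, Bool.not_false]
      · exact (ihA w ρ).2
      · exact (ihA w ρ).1
  | all x A ihA =>
      intro w ρ
      constructor
      · simp only [NModel.force, tau, IModel.iforce]
        exact forall_congr' fun w' => forall_congr' fun _ =>
          forall_congr' fun d => forall_congr' fun _ => (ihA w' (upd ρ x d)).1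
      · simp only [NModel.force, tau, IModel.iforce]
        exact exists_congr fun d => and_congr_right fun _ => (ihA w (upd ρ x d)).2
  | ex x A ihA =>
      intro w ρ
      constructor
      · simp only [NModel.force, tau, IModel.iforce]
        exact exists_congr fun d => and_congr_right fun _ => (ihA w (upd ρ x d)).1
      · simp only [NModel.force, tau, IModel.iforce]
        exact forall_congr' fun w' => forall_congr' fun _ =>
          forall_congr' fun d => forall_congr' fun _ => (ihA w' (upd ρ x d)).2

/-- Given any Nelsonian structure `M` with its paradefinite
valuation, the intuitionistic structure `mkI M` on the same frame and domains
(interpreting `P` by `φ(P)` and `P′` by `φ(¬P)`) satisfies: for every world `w`,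
every assignment `ρ` and every formula `C` of Nelson's language,
`M, w ⊩ᴺ C` iff `mkI M, w ⊩ᴵ τ(C)`. -/
theorem nelson_to_int_semantic_embedding (M : NModel ℕ 0) (C : FormN ℕ)
    (w : M.W) (ρ : ℕ → M.D) :
    M.force true C w ρ ↔ (mkI M).iforce (tau C) w ρ := by
  exact (nelson_aux M C w ρ).1
end

section
/- Given any intuitionistic Kripke structure I (over the language extended with primed predicates P′) with valuation ⊩ᴵ, one can construct a Nelsonian structure N on the same frame and domains, by setting φ_w(P) to the interpretation of P and φ_w(¬P) to the interpretation of P′, such that for every formula C of Nelson's language and every world w, N,w ⊩ᴺ C iff I,w ⊩ᴵ τ(C). -/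
variable {P : Type}

/-- The Nelsonian companion structure of an intuitionistic structure over the
primed-predicate language: same frame and domains; the positive extension of `P`
is the interpretation of `P` (i.e. `Sum.inl P`) and its negative extension is
the interpretation of the primed predicate `P′` (i.e. `Sum.inr P`). -/
def mkN (I : IModel (ℕ ⊕ ℕ) (Sum.inl 0)) : NModel ℕ 0 where
  W := I.W
  w0 := I.w0
  R := I.R
  refl := I.refl
  trans := I.trans
  D := I.D
  cval := I.cval
  Dw := I.Dw
  Dw_ne := I.Dw_ne
  Dw_mono := I.Dw_mono
  pos := fun w p ds => I.pos w (Sum.inl p) ds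
  nneg := fun w p ds => I.pos w (Sum.inr p) ds
  pos_mono := fun p ds h hp => I.pos_mono (Sum.inl p) ds h hp
  nneg_mono := fun p ds h hp => I.pos_mono (Sum.inr p) ds h hp
  eq_pos := fun w d e => I.eq_pos w d e


lemma mkN_key (I : IModel (ℕ ⊕ ℕ) (Sum.inl 0)) :
    ∀ (C : FormN ℕ) (w : I.W) (ρ : ℕ → I.D),
      ((mkN I).force true C w ρ ↔ I.iforce (tau C) w ρ) ∧
      ((mkN I).force false C w ρ ↔ I.iforce (tau (.neg C)) w ρ) := by
  intro C
  induction C with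
  | atom p ts =>
      intro w ρ
      simp only [NModel.force, IModel.iforce, tau]
      exact ⟨Iff.rfl, Iff.rfl⟩
  | imp A B ihA ihB =>
      intro w ρ
      constructor
      · simp only [NModel.force, IModel.iforce, tau]
        constructor
        · intro h w' hw ha
          exact ((ihB w' ρ).1).mp (h w' hw (((ihA w' ρ).1).mpr ha))
        · intro h w' hw ha
          exact ((ihB w' ρ).1).mpr (h w' hw (((ihA w' ρ).1).mp ha))
      · simp only [NModel.force, IModel.iforce, tau]
        exact and_congr ((ihA w ρ).1) ((ihB w ρ).2)
  | and A B ihA ihB =>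
      intro w ρ
      simp only [NModel.force, IModel.iforce, tau]
      exact ⟨and_congr ((ihA w ρ).1) ((ihB w ρ).1),
        or_congr ((ihA w ρ).2) ((ihB w ρ).2)⟩
  | or A B ihA ihB =>
      intro w ρ
      simp only [NModel.force, IModel.iforce, tau]
      exact ⟨or_congr ((ihA w ρ).1) ((ihB w ρ).1),
        and_congr ((ihA w ρ).2) ((ihB w ρ).2)⟩
  | neg A ihA =>
      intro w ρ
      simp only [NModel.force, tau]
      exact ⟨(ihA w ρ).2, (ihA w ρ).1⟩
  | all x A ihA =>
      intro w ρ
      constructor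
      · simp only [NModel.force, IModel.iforce, tau]
        exact forall_congr' fun w' => forall_congr' fun hw =>
          forall_congr' fun d => forall_congr' fun hd => (ihA w' (upd ρ x d)).1
      · simp only [NModel.force, IModel.iforce, tau]
        exact exists_congr fun d => and_congr Iff.rfl ((ihA w (upd ρ x d)).2)
  | ex x A ihA =>
      intro w ρ
      constructor
      · simp only [NModel.force, IModel.iforce, tau]
        exact exists_congr fun d => and_congr Iff.rfl ((ihA w (upd ρ x d)).1)
      · simp only [NModel.force, IModel.iforce, tau]
        exact forall_congr' fun w' => forall_congr' fun hw =>
          forall_congr' fun d => forall_congr' fun hd => (ihA w' (upd ρ x d)).2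

/-- Given any intuitionistic structure `I` over the language with
primed predicates, the Nelsonian structure `mkN I` on the same frame and domains
(with `φ(P)` the interpretation of `P` and `φ(¬P)` the interpretation of `P′`)
satisfies: for every formula `C` of Nelson's language, every world `w` and
assignment `ρ`, `mkN I, w ⊩ᴺ C` iff `I, w ⊩ᴵ τ(C)`. -/
theorem int_to_nelson_semantic_embedding (I : IModel (ℕ ⊕ ℕ) (Sum.inl 0))
    (C : FormN ℕ) (w : I.W) (ρ : ℕ → I.D) :
    (mkN I).force true C w ρ ↔ I.iforce (tau C) w ρ := by
  exact (mkN_key I C w ρ).1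
end

section
/- For every formula C, C is valid in all Nelsonian Kripke structures (N4 semantics) if and only if τ(C) is valid in all intuitionistic Kripke structures, where τ is the strong-negation translation. -/
variable {P : Type}

/-- Validity in Nelsonian Kripke semantics: truth at every world of every
Nelsonian structure under every assignment. -/
def NValid (C : FormN ℕ) : Prop :=
  ∀ (M : NModel ℕ 0) (w : M.W) (ρ : ℕ → M.D), M.force true C w ρ

/-- Validity in intuitionistic Kripke semantics (over the primed-predicate
language): truth at every world of every intuitionistic structure. -/
def IValid (C : FormI (ℕ ⊕ ℕ)) : Prop :=
  ∀ (I : IModel (ℕ ⊕ ℕ) (Sum.inl 0)) (w : I.W) (ρ : ℕ → I.D), I.iforce C w ρ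

def toI (M : NModel ℕ 0) : IModel (ℕ ⊕ ℕ) (Sum.inl 0) where
  W := M.W
  w0 := M.w0
  R := M.R
  refl := M.refl
  trans := M.trans
  D := M.D
  cval := M.cval
  Dw := M.Dw
  Dw_ne := M.Dw_ne
  Dw_mono := M.Dw_mono
  pos := fun w q ds => q.elim (fun p => M.pos w p ds) (fun p => M.nneg w p ds)
  pos_mono := by
    rintro w w' (p | p) ds h hp
    · exact M.pos_mono p ds h hp
    · exact M.nneg_mono p ds h hp
  eq_pos := fun w d e => M.eq_pos w d e

def toN (I : IModel (ℕ ⊕ ℕ) (Sum.inl 0)) : NModel ℕ 0 where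
  W := I.W
  w0 := I.w0
  R := I.R
  refl := I.refl
  trans := I.trans
  D := I.D
  cval := I.cval
  Dw := I.Dw
  Dw_ne := I.Dw_ne
  Dw_mono := I.Dw_mono
  pos := fun w p ds => I.pos w (.inl p) ds
  nneg := fun w p ds => I.pos w (.inr p) ds
  pos_mono := fun p ds h hp => I.pos_mono (.inl p) ds h hp
  nneg_mono := fun p ds h hp => I.pos_mono (.inr p) ds h hp
  eq_pos := fun w d e => I.eq_pos w d e

lemma tval_toI (M : NModel ℕ 0) (ρ : ℕ → M.D) (t : Tm) :
    (toI M).tval ρ t = M.tval ρ t := by cases t <;> rfl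

lemma tval_toN (I : IModel (ℕ ⊕ ℕ) (Sum.inl 0)) (ρ : ℕ → I.D) (t : Tm) :
    (toN I).tval ρ t = I.tval ρ t := by cases t <;> rfl

lemma keyN (M : NModel ℕ 0) : ∀ (A : FormN ℕ) (w : M.W) (ρ : ℕ → M.D),
    ((toI M).iforce (tau A) w ρ ↔ M.force true A w ρ) ∧
    ((toI M).iforce (tau (.neg A)) w ρ ↔ M.force false A w ρ) := by
  intro A
  induction A with
  | atom p ts =>
    intro w ρ
    have hm : ts.map ((toI M).tval ρ) = ts.map (M.tval ρ) :=
      List.map_congr_left fun t _ => tval_toI M ρ t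
    constructor <;> · simp only [tau, IModel.iforce, NModel.force]; rw [hm]; exact Iff.rfl
  | imp A B ihA ihB =>
    intro w ρ
    constructor
    · simp only [tau, IModel.iforce, NModel.force]
      constructor
      · intro h w' hr ha
        exact ((ihB w' ρ).1).mp (h w' hr (((ihA w' ρ).1).mpr ha))
      · intro h w' hr ha
        exact ((ihB w' ρ).1).mpr (h w' hr (((ihA w' ρ).1).mp ha))
    · simp only [tau, IModel.iforce, NModel.force]
      rw [(ihA w ρ).1, (ihB w ρ).2]
  | and A B ihA ihB =>
    intro w ρ
    constructor
    · simp only [tau, IModel.iforce, NModel.force]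
      rw [(ihA w ρ).1, (ihB w ρ).1]
    · simp only [tau, IModel.iforce, NModel.force]
      rw [(ihA w ρ).2, (ihB w ρ).2]
  | or A B ihA ihB =>
    intro w ρ
    constructor
    · simp only [tau, IModel.iforce, NModel.force]
      rw [(ihA w ρ).1, (ihB w ρ).1]
    · simp only [tau, IModel.iforce, NModel.force]
      rw [(ihA w ρ).2, (ihB w ρ).2]
  | neg A ih =>
    intro w ρ
    refine ⟨(ih w ρ).2, ?_⟩
    simp only [tau, NModel.force]
    exact (ih w ρ).1
  | all x A ih =>
    intro w ρ
    constructor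
    · simp only [tau, IModel.iforce, NModel.force]
      constructor
      · intro h w' hr d hd
        exact ((ih w' (upd ρ x d)).1).mp (h w' hr d hd)
      · intro h w' hr d hd
        exact ((ih w' (upd ρ x d)).1).mpr (h w' hr d hd)
    · simp only [tau, IModel.iforce, NModel.force]
      constructor
      · rintro ⟨d, hd, h⟩
        exact ⟨d, hd, ((ih w (upd ρ x d)).2).mp h⟩
      · rintro ⟨d, hd, h⟩
        exact ⟨d, hd, ((ih w (upd ρ x d)).2).mpr h⟩
  | ex x A ih =>
    intro w ρ
    constructor
    · simp only [tau, IModel.iforce, NModel.force]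
      constructor
      · rintro ⟨d, hd, h⟩
        exact ⟨d, hd, ((ih w (upd ρ x d)).1).mp h⟩
      · rintro ⟨d, hd, h⟩
        exact ⟨d, hd, ((ih w (upd ρ x d)).1).mpr h⟩
    · simp only [tau, IModel.iforce, NModel.force]
      constructor
      · intro h w' hr d hd
        exact ((ih w' (upd ρ x d)).2).mp (h w' hr d hd)
      · intro h w' hr d hd
        exact ((ih w' (upd ρ x d)).2).mpr (h w' hr d hd)

lemma keyI (I : IModel (ℕ ⊕ ℕ) (Sum.inl 0)) : ∀ (A : FormN ℕ) (w : I.W) (ρ : ℕ → I.D),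
    (I.iforce (tau A) w ρ ↔ (toN I).force true A w ρ) ∧
    (I.iforce (tau (.neg A)) w ρ ↔ (toN I).force false A w ρ) := by
  intro A
  induction A with
  | atom p ts =>
    intro w ρ
    have hm : ts.map ((toN I).tval ρ) = ts.map (I.tval ρ) :=
      List.map_congr_left fun t _ => tval_toN I ρ t
    constructor <;> · simp only [tau, IModel.iforce, NModel.force]; rw [hm]; exact Iff.rfl
  | imp A B ihA ihB =>
    intro w ρ
    constructor
    · simp only [tau, IModel.iforce, NModel.force]
      constructor
      · intro h w' hr ha
        exact ((ihB w' ρ).1).mp (h w' hr (((ihA w' ρ).1).mpr ha))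
      · intro h w' hr ha
        exact ((ihB w' ρ).1).mpr (h w' hr (((ihA w' ρ).1).mp ha))
    · simp only [tau, IModel.iforce, NModel.force]
      rw [(ihA w ρ).1, (ihB w ρ).2]
  | and A B ihA ihB =>
    intro w ρ
    constructor
    · simp only [tau, IModel.iforce, NModel.force]
      rw [(ihA w ρ).1, (ihB w ρ).1]
    · simp only [tau, IModel.iforce, NModel.force]
      rw [(ihA w ρ).2, (ihB w ρ).2]
  | or A B ihA ihB =>
    intro w ρ
    constructor
    · simp only [tau, IModel.iforce, NModel.force]
      rw [(ihA w ρ).1, (ihB w ρ).1]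
    · simp only [tau, IModel.iforce, NModel.force]
      rw [(ihA w ρ).2, (ihB w ρ).2]
  | neg A ih =>
    intro w ρ
    refine ⟨(ih w ρ).2, ?_⟩
    simp only [tau, NModel.force]
    exact (ih w ρ).1
  | all x A ih =>
    intro w ρ
    constructor
    · simp only [tau, IModel.iforce, NModel.force]
      constructor
      · intro h w' hr d hd
        exact ((ih w' (upd ρ x d)).1).mp (h w' hr d hd)
      · intro h w' hr d hd
        exact ((ih w' (upd ρ x d)).1).mpr (h w' hr d hd)
    · simp only [tau, IModel.iforce, NModel.force]
      constructor
      · rintro ⟨d, hd, h⟩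
        exact ⟨d, hd, ((ih w (upd ρ x d)).2).mp h⟩
      · rintro ⟨d, hd, h⟩
        exact ⟨d, hd, ((ih w (upd ρ x d)).2).mpr h⟩
  | ex x A ih =>
    intro w ρ
    constructor
    · simp only [tau, IModel.iforce, NModel.force]
      constructor
      · rintro ⟨d, hd, h⟩
        exact ⟨d, hd, ((ih w (upd ρ x d)).1).mp h⟩
      · rintro ⟨d, hd, h⟩
        exact ⟨d, hd, ((ih w (upd ρ x d)).1).mpr h⟩
    · simp only [tau, IModel.iforce, NModel.force]
      constructor
      · intro h w' hr d hd
        exact ((ih w' (upd ρ x d)).2).mp (h w' hr d hd)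
      · intro h w' hr d hd
        exact ((ih w' (upd ρ x d)).2).mpr (h w' hr d hd)

/-- For every formula `C` of Nelson's language, `C` is valid in all
Nelsonian Kripke structures iff `τ(C)` is valid in all intuitionistic Kripke
structures, where `τ` is the strong-negation translation. -/
theorem semantic_embedding (C : FormN ℕ) : NValid C ↔ IValid (tau C) := by
  constructor
  · intro h I w ρ
    exact ((keyI I C w ρ).1).mpr (h (toN I) w ρ)
  · intro h M w ρ
    exact ((keyN M C w ρ).1).mp (h (toI M) w ρ)
end
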